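/- For a discrete random variable X and statistic 𝒮 with S = 𝒮(X): if f(x|θ) factorizes as g(x)·f̃(𝒮(x)|θ) with g independent of θ, then for any prior on θ, I(θ;X|S) = 0. -/

import Mathlib

open Real BigOperators

namespace Disc

variable {Ω : Type*} [Fintype Ω]

/-- A probability mass function on a finite sample space. -/
def IsPMF (p : Ω → ℝ) : Prop := (∀ ω, 0 ≤ p ω) ∧ ∑ ω, p ω = 1

/-- Probability that the random variable `X` takes value `x`. -/
noncomputable def pr {α : Type*} [Fintype α] [DecidableEq α]
    (p : Ω → ℝ) (X : Ω → α) (x : α) : ℝ :=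
  ∑ ω, if X ω = x then p ω else 0

/-- Shannon entropy of a discrete random variable. -/
noncomputable def H {α : Type*} [Fintype α] [DecidableEq α]
    (p : Ω → ℝ) (X : Ω → α) : ℝ :=
  - ∑ x, pr p X x * Real.log (pr p X x)

/-- Conditional Shannon entropy `H(X|Y)` (with the `0 log 0 = 0` and `x/0 = 0` conventions). -/
noncomputable def condH {α β : Type*} [Fintype α] [Fintype β] [DecidableEq α] [DecidableEq β]
    (p : Ω → ℝ) (X : Ω → α) (Y : Ω → β) : ℝ :=
  - ∑ x, ∑ y, pr p (fun ω => (X ω, Y ω)) (x, y) *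
      Real.log (pr p (fun ω => (X ω, Y ω)) (x, y) / pr p Y y)

/-- Mutual information `I(X;Y) = H(X) - H(X|Y)`. -/
noncomputable def MI {α β : Type*} [Fintype α] [Fintype β] [DecidableEq α] [DecidableEq β]
    (p : Ω → ℝ) (X : Ω → α) (Y : Ω → β) : ℝ :=
  H p X - condH p X Y

/-- Conditional mutual information `I(X;Y|Z) = H(X|Z) - H(X|(Y,Z))`. -/
noncomputable def condMI {α β γ : Type*} [Fintype α] [Fintype β] [Fintype γ]
    [DecidableEq α] [DecidableEq β] [DecidableEq γ]
    (p : Ω → ℝ) (X : Ω → α) (Y : Ω → β) (Z : Ω → γ) : ℝ :=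
  condH p X Z - condH p X (fun ω => (Y ω, Z ω))

end Disc

open Disc

/-!
Conditional entropy is the average of `-log` of the posterior, `H(θ | Y) = -∑ p log P(θ | Y)`, so
`H(θ | S) = H(θ | X, S)` as soon as the two posteriors agree wherever `p(θ, x) ≠ 0`. Under the
factorization both are proportional to `π(θ) f̃(𝒮 x | θ)`: given `X = x` the factor `g x` cancels,
and given `S = 𝒮 x` so does its fibre sum `∑_{𝒮 x' = 𝒮 x} g x'`, which is nonzero there because
`f ≥ 0`.
-/

namespace Disc

section General

variable {Ω α β γ : Type*} [Fintype Ω] [Fintype α] [Fintype β] [Fintype γ]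
  [DecidableEq α] [DecidableEq β] [DecidableEq γ]

/-- `P(X = x | Y = y)`, with the junk value `0` when `P(Y = y) = 0`. -/
noncomputable def condPr (p : Ω → ℝ) (X : Ω → α) (Y : Ω → β) (x : α) (y : β) : ℝ :=
  pr p (fun ω => (X ω, Y ω)) (x, y) / pr p Y y

theorem sum_pr_mul (p : Ω → ℝ) (X : Ω → α) (L : α → ℝ) :
    ∑ a, pr p X a * L a = ∑ ω, p ω * L (X ω) := by
  simp only [pr, Finset.sum_mul, ite_mul, zero_mul]
  rw [Finset.sum_comm]
  simp

theorem condH_eq_neg_sum (p : Ω → ℝ) (X : Ω → α) (Y : Ω → β) :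
    condH p X Y = -∑ ω, p ω * log (condPr p X Y (X ω) (Y ω)) := by
  rw [condH, ← Fintype.sum_prod_type']
  exact congrArg Neg.neg
    (sum_pr_mul p (fun ω => (X ω, Y ω)) fun xy => log (condPr p X Y xy.1 xy.2))

theorem condH_congr (p : Ω → ℝ) (X : Ω → α) (Y : Ω → β) (Z : Ω → γ)
    (h : ∀ ω, p ω ≠ 0 → condPr p X Y (X ω) (Y ω) = condPr p X Z (X ω) (Z ω)) :
    condH p X Y = condH p X Z := by
  rw [condH_eq_neg_sum, condH_eq_neg_sum]
  congr 1
  refine Finset.sum_congr rfl fun ω _ => ?_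
  by_cases hω : p ω = 0
  · simp [hω]
  · rw [h ω hω]

theorem pr_eq_sum_pr_prod (p : Ω → ℝ) (X : Ω → α) (Y : Ω → β) (y : β) :
    pr p Y y = ∑ x, pr p (fun ω => (X ω, Y ω)) (x, y) := by
  simp only [pr, Prod.mk.injEq]
  rw [Finset.sum_comm]
  simp [ite_and]

theorem condPr_eq_div_sum_of_eq_mul (p : Ω → ℝ) (X : Ω → α) (Y : Ω → β) (y : β)
    {c : ℝ} (hc : c ≠ 0) {u : α → ℝ} (hu : ∀ x, pr p (fun ω => (X ω, Y ω)) (x, y) = c * u x)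
    (x : α) : condPr p X Y x y = u x / ∑ x', u x' := by
  rw [condPr, pr_eq_sum_pr_prod p X Y y]
  simp_rw [hu, ← Finset.mul_sum]
  exact mul_div_mul_left _ _ hc

end General

section Product

variable {Θ α γ : Type*} [Fintype Θ] [Fintype α] [Fintype γ] [DecidableEq Θ] [DecidableEq γ]

theorem pr_fst_map_snd (p : Θ × α → ℝ) (φ : α → γ) (t : Θ) (c : γ) :
    pr p (fun tx => (tx.1, φ tx.2)) (t, c) = ∑ x with φ x = c, p (t, x) := by
  simp [pr, Fintype.sum_prod_type, ite_and, Finset.sum_filter]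

theorem pr_fst_map_snd_of_injective (p : Θ × α → ℝ) {φ : α → γ} (hφ : φ.Injective)
    (t : Θ) (x : α) : pr p (fun tx => (tx.1, φ tx.2)) (t, φ x) = p (t, x) := by
  rw [pr_fst_map_snd, Finset.sum_eq_single_of_mem x (by simp)]
  exact fun y hy hyx => absurd (hφ (Finset.mem_filter.1 hy).2) hyx

variable {β : Type*} [Fintype β] [DecidableEq β]
  {p : Θ × α → ℝ} {g : α → ℝ} {h : Θ → β → ℝ} {𝒮 : α → β}

theorem condPr_fst_statistic_of_factorization (hp : ∀ t x, p (t, x) = g x * h t (𝒮 x))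
    {s : β} (hs : ∑ x with 𝒮 x = s, g x ≠ 0) (t : Θ) :
    condPr p (fun tx => tx.1) (fun tx => 𝒮 tx.2) t s = h t s / ∑ t', h t' s := by
  refine condPr_eq_div_sum_of_eq_mul p _ _ s hs (u := fun t' => h t' s) (fun t' => ?_) t
  rw [pr_fst_map_snd, Finset.sum_mul]
  exact Finset.sum_congr rfl fun x hx => by rw [hp, (Finset.mem_filter.1 hx).2]

theorem condPr_fst_data_of_factorization [DecidableEq α] (hp : ∀ t x, p (t, x) = g x * h t (𝒮 x))
    {x : α} (hx : g x ≠ 0) (t : Θ) :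
    condPr p (fun tx => tx.1) (fun tx => (tx.2, 𝒮 tx.2)) t (x, 𝒮 x) =
      h t (𝒮 x) / ∑ t', h t' (𝒮 x) := by
  refine condPr_eq_div_sum_of_eq_mul p _ _ (x, 𝒮 x) hx (u := fun t' => h t' (𝒮 x)) (fun t' => ?_) t
  exact (pr_fst_map_snd_of_injective p (φ := fun x => (x, 𝒮 x))
    (fun _ _ hxy => congrArg Prod.fst hxy) t' x).trans (hp t' x)

end Product

theorem sum_fiber_ne_zero_of_nonneg_of_eq_mul {α β : Type*} [Fintype α] [DecidableEq β]
    {f g : α → ℝ} {c : β → ℝ} {𝒮 : α → β} (hf : ∀ x, 0 ≤ f x)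
    (hfact : ∀ x, f x = g x * c (𝒮 x)) {x : α} (hx : f x ≠ 0) :
    ∑ x' with 𝒮 x' = 𝒮 x, g x' ≠ 0 := by
  have hfiber : ∑ x' with 𝒮 x' = 𝒮 x, f x' = (∑ x' with 𝒮 x' = 𝒮 x, g x') * c (𝒮 x) := by
    rw [Finset.sum_mul]
    exact Finset.sum_congr rfl fun x' hx' => by rw [hfact, (Finset.mem_filter.1 hx').2]
  have hle : f x ≤ ∑ x' with 𝒮 x' = 𝒮 x, f x' :=
    Finset.single_le_sum (fun x' _ => hf x') (Finset.mem_filter.2 ⟨Finset.mem_univ x, rfl⟩)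
  intro h0
  rw [hfiber, h0, zero_mul] at hle
  exact hx (le_antisymm hle (hf x))

end Disc

theorem factorization_implies_condMI_zero_general
    {Θ α β : Type*} [Fintype Θ] [Fintype α] [Fintype β]
    [DecidableEq Θ] [DecidableEq α] [DecidableEq β]
    (pri : Θ → ℝ)
    (f : α → Θ → ℝ) (hf0 : ∀ t x, 0 ≤ f x t)
    (𝒮 : α → β) (g : α → ℝ) (ft : β → Θ → ℝ)
    (hfact : ∀ x t, f x t = g x * ft (𝒮 x) t) :
    condMI (fun tx : Θ × α => pri tx.1 * f tx.2 tx.1)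
      (fun tx => tx.1) (fun tx => tx.2) (fun tx => 𝒮 tx.2) = 0 := by
  set h : Θ → β → ℝ := fun t s => pri t * ft s t
  have hp : ∀ t x, pri t * f x t = g x * h t (𝒮 x) := fun t x => by
    rw [hfact]; ring
  refine sub_eq_zero.2 (condH_congr _ _ _ _ ?_)
  rintro ⟨t, x⟩ hpx
  have hfx : f x t ≠ 0 := right_ne_zero_of_mul hpx
  have hg : g x ≠ 0 := left_ne_zero_of_mul (hfact x t ▸ hfx)
  have hG : ∑ x' with 𝒮 x' = 𝒮 x, g x' ≠ 0 :=
    sum_fiber_ne_zero_of_nonneg_of_eq_mul (c := (ft · t)) (hf0 t) (hfact · t) hfx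
  exact (condPr_fst_statistic_of_factorization (h := h) hp hG t).trans
    (condPr_fst_data_of_factorization (h := h) hp hg t).symm

/-- If the likelihood factorizes as `f(x|θ) = g(x) · f̃(𝒮(x)|θ)`, then for any prior,
`I(θ;X|S) = 0` under the joint distribution `p(θ,x) = pri(θ) f(x|θ)`. -/
theorem factorization_implies_condMI_zero
    {Θ α β : Type*} [Fintype Θ] [Fintype α] [Fintype β]
    [DecidableEq Θ] [DecidableEq α] [DecidableEq β]
    (pri : Θ → ℝ) (hpri0 : ∀ t, 0 ≤ pri t) (hpri1 : ∑ t, pri t = 1)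
    (f : α → Θ → ℝ) (hf0 : ∀ t x, 0 ≤ f x t) (hf1 : ∀ t, ∑ x, f x t = 1)
    (𝒮 : α → β) (g : α → ℝ) (ft : β → Θ → ℝ)
    (hfact : ∀ x t, f x t = g x * ft (𝒮 x) t) :
    condMI (fun tx : Θ × α => pri tx.1 * f tx.2 tx.1)
      (fun tx => tx.1) (fun tx => tx.2) (fun tx => 𝒮 tx.2) = 0 :=
  factorization_implies_condMI_zero_general pri f hf0 𝒮 g ft hfact
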